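/- Let V be a finite type, N ∈ ℕ, Ω := {η : V → ℕ | Σ_x η_x ≤ N}, and 𝒜 the annihilation operator on functions Ω → ℝ, (𝒜f)(η) := Σ_{x ∈ V} η_x · f(η − δ_x). Let L be a linear operator on functions Ω → ℝ commuting with 𝒜 and preserving each particle-number sector. Assume moreover that for every f : Ω → ℝ and every η ∈ Ω the limit (Pf)(η) := lim_{t→∞} (exp(t·L)f)(η) exists. Then for every x = (x_1,…,x_n) ∈ V^n with n ≤ N and every configuration ζ with |ζ| = m, 1 ≤ m < n: (P(F(ζ,·)))(φ(x)) = Σ_{S ⊆ {1,…,n}, |S| = m} (P h_ζ)(φ(x|_S)), where h_ζ is the indicator of ζ and x|_S = (x_i)_{i ∈ S}. -/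

import Mathlib

/-- Configurations on `V` with at most `N` particles. -/
abbrev Conf (V : Type*) [Fintype V] (N : ℕ) := {η : V → ℕ // ∑ x, η x ≤ N}

noncomputable instance Conf.fintype (V : Type*) [Fintype V] [DecidableEq V] (N : ℕ) :
    Fintype (Conf V N) :=
  Fintype.ofInjective
    (fun η : Conf V N =>
      (fun x => ⟨η.1 x, Nat.lt_succ_of_le
        ((Finset.single_le_sum (f := η.1) (fun i _ => Nat.zero_le _)
          (Finset.mem_univ x)).trans η.2)⟩ : V → Fin (N + 1)))
    (by
      intro a b h
      apply Subtype.ext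
      funext x
      exact congrArg Fin.val (congrFun h x))

/-- `η - δ_x` : remove one particle at `x`. -/
def removeAt {V : Type*} [Fintype V] [DecidableEq V] {N : ℕ}
    (η : Conf V N) (x : V) : Conf V N :=
  ⟨fun y => η.1 y - (if y = x then 1 else 0),
    le_trans (Finset.sum_le_sum fun i _ => Nat.sub_le _ _) η.2⟩

/-- The annihilation operator `(𝒜 f)(η) = ∑_x η_x f(η - δ_x)`. -/
noncomputable def ann {V : Type*} [Fintype V] [DecidableEq V] {N : ℕ}
    (f : Conf V N → ℝ) : Conf V N → ℝ :=
  fun η => ∑ x : V, (η.1 x : ℝ) * f (removeAt η x)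

/-- `F ξ η = ∏_{x ∈ V} C(η x, ξ x)`. -/
def Ffun {V : Type*} [Fintype V] {N : ℕ} (ξ η : Conf V N) : ℕ :=
  ∏ x : V, Nat.choose (η.1 x) (ξ.1 x)

/-- The configuration `φ((xᵢ)_{i ∈ S}) = ∑_{i ∈ S} δ_{xᵢ}` of a subfamily of
labeled particle positions, as an element of `Conf V N` (for `n ≤ N`). -/
def phiS {V : Type*} [Fintype V] [DecidableEq V] {N n : ℕ} (hn : n ≤ N)
    (x : Fin n → V) (S : Finset (Fin n)) : Conf V N :=
  ⟨fun y => ∑ i ∈ S, if x i = y then 1 else 0, by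
    calc ∑ y : V, ∑ i ∈ S, (if x i = y then (1 : ℕ) else 0)
        = ∑ i ∈ S, ∑ y : V, (if x i = y then (1 : ℕ) else 0) := Finset.sum_comm
      _ = ∑ _i ∈ S, 1 := by
            refine Finset.sum_congr rfl fun i _ => ?_
            simp [Finset.sum_ite_eq]
      _ = S.card := by simp
      _ ≤ n := by simpa using Finset.card_le_univ S
      _ ≤ N := hn⟩

/-- Operator exponential `exp(t L)` on the finite-dimensional space of functions. -/
noncomputable def expOp {Ω : Type*} [Fintype Ω] (t : ℝ) (L : (Ω → ℝ) →ₗ[ℝ] (Ω → ℝ)) :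
    (Ω → ℝ) →L[ℝ] (Ω → ℝ) :=
  NormedSpace.exp (t • (LinearMap.toContinuousLinearMap L))

open Filter Topology

/-!
The semigroup `exp (t L)` commutes with every operator `A` commuting with `L`, and since `A`
is continuous on the finite-dimensional space of functions, so does the limit `P`. This
applies to the annihilation operator `𝒜` and to the projections onto particle-number sectors.
On the sector with `m + k` particles, `𝒜^k h_ζ = k! F(ζ,·)`, since one application of `𝒜`
turns `F(ζ,·)` on sector `j` into `(j + 1 - |ζ|) F(ζ,·)` on sector `j + 1`. Hence
`P F(ζ,·) (φ x) = (k!)⁻¹ (𝒜^k (P h_ζ)) (φ x)`, and `k` annihilations applied at `φ x` remove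
`k` of the labelled particles in every order, which gives `k!` times the sum over the
`m`-element subfamilies.
-/

lemma Finset.sum_sum_powersetCard_erase {α M : Type*} [DecidableEq α] [AddCommMonoid M]
    (S : Finset α) (r : ℕ) (f : Finset α → M) :
    ∑ i ∈ S, ∑ T ∈ (S.erase i).powersetCard r, f T
      = (S.card - r) • ∑ T ∈ S.powersetCard r, f T := by
  rw [Finset.sum_comm' (t' := S.powersetCard r) (s' := fun T => S \ T), Finset.smul_sum]
  · refine Finset.sum_congr rfl fun T hT => ?_
    rw [Finset.sum_const, Finset.card_sdiff_of_subset (Finset.mem_powersetCard.1 hT).1,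
      (Finset.mem_powersetCard.1 hT).2]
  · intro i T
    simp only [Finset.mem_powersetCard, Finset.subset_erase, Finset.mem_sdiff]
    tauto

section Semigroup

variable {Ω : Type*} [Fintype Ω]

lemma expOp_apply_of_commute {L A : Module.End ℝ (Ω → ℝ)} (h : Commute A L) (t : ℝ)
    (f : Ω → ℝ) : expOp t L (A f) = A (expOp t L f) := by
  have hc : Commute (LinearMap.toContinuousLinearMap A) (t • LinearMap.toContinuousLinearMap L) :=
    Commute.smul_right (ContinuousLinearMap.ext fun g => LinearMap.congr_fun h.eq g) t
  exact (DFunLike.congr_fun hc.exp_right.eq f).symm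

lemma limit_apply_of_commute {L A : Module.End ℝ (Ω → ℝ)} (h : Commute A L)
    {P : (Ω → ℝ) → Ω → ℝ} (hP : ∀ f η, Tendsto (fun t : ℝ => expOp t L f η) atTop (𝓝 (P f η)))
    (f : Ω → ℝ) : P (A f) = A (P f) := by
  have hlim : ∀ g, Tendsto (fun t : ℝ => expOp t L g) atTop (𝓝 (P g)) :=
    fun g => tendsto_pi_nhds.2 (hP g)
  refine tendsto_nhds_unique (hlim (A f)) ?_
  simp_rw [expOp_apply_of_commute h]
  exact (A.continuous_of_finiteDimensional.tendsto _).comp (hlim f)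

end Semigroup

section LevelSets

variable {Ω ι : Type*} [DecidableEq ι] (s : Ω → ι)

def levelProj (k : ι) : Module.End ℝ (Ω → ℝ) where
  toFun f η := if s η = k then f η else 0
  map_add' f g := by ext η; dsimp only [Pi.add_apply]; split_ifs <;> simp
  map_smul' c f := by ext η; dsimp only [Pi.smul_apply]; split_ifs <;> simp

@[simp]
lemma levelProj_apply (k : ι) (f : Ω → ℝ) (η : Ω) :
    levelProj s k f η = if s η = k then f η else 0 := rfl

def PreservesLevels (L : Module.End ℝ (Ω → ℝ)) : Prop :=
  ∀ k f, (∀ η, s η ≠ k → f η = 0) → ∀ η, s η ≠ k → L f η = 0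

variable {s}

lemma sum_levelProj [Fintype Ω] (f : Ω → ℝ) :
    ∑ k ∈ Finset.image s Finset.univ, levelProj s k f = f := by
  ext η
  simp [Finset.sum_apply]

lemma PreservesLevels.apply_eq [Fintype Ω] {L : Module.End ℝ (Ω → ℝ)} (hL : PreservesLevels s L)
    (f : Ω → ℝ) (η : Ω) : L f η = L (levelProj s (s η) f) η := by
  conv_lhs => rw [← sum_levelProj (s := s) f, map_sum, Finset.sum_apply]
  refine Finset.sum_eq_single_of_mem _ (Finset.mem_image_of_mem s (Finset.mem_univ η)) ?_
  exact fun k _ hk => hL k _ (fun ξ hξ => if_neg hξ) η (Ne.symm hk)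

lemma PreservesLevels.commute_levelProj [Fintype Ω] {L : Module.End ℝ (Ω → ℝ)}
    (hL : PreservesLevels s L) (k : ι) : Commute (levelProj s k) L := by
  ext f η
  change (if s η = k then L f η else 0) = L (levelProj s k f) η
  split_ifs with hη
  · rw [hL.apply_eq, hη]
  · exact (hL k _ (fun ξ hξ => if_neg hξ) η hη).symm

lemma PreservesLevels.limit_congr [Fintype Ω] {L : Module.End ℝ (Ω → ℝ)}
    (hL : PreservesLevels s L)
    {P : (Ω → ℝ) → Ω → ℝ} (hP : ∀ f η, Tendsto (fun t : ℝ => expOp t L f η) atTop (𝓝 (P f η)))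
    {f f' : Ω → ℝ} {η : Ω} (hff' : ∀ ξ, s ξ = s η → f ξ = f' ξ) : P f η = P f' η := by
  have hproj : levelProj s (s η) f = levelProj s (s η) f' := by
    ext ξ
    simp only [levelProj_apply]
    split_ifs with hξ
    exacts [hff' ξ hξ, rfl]
  have key : ∀ g, P g η = P (levelProj s (s η) g) η := fun g => by
    simp [limit_apply_of_commute (hL.commute_levelProj (s η)) hP g]
  rw [key f, hproj, ← key f']

end LevelSets

section Configurations

variable {V : Type*} [Fintype V] {N : ℕ}

lemma preservesLevels_of_sector {L : Module.End ℝ (Conf V N → ℝ)}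
    (hsector : ∀ k ≤ N, ∀ f : Conf V N → ℝ,
        (∀ η : Conf V N, (∑ x, η.1 x) ≠ k → f η = 0) →
        ∀ η : Conf V N, (∑ x, η.1 x) ≠ k → L f η = 0) :
    PreservesLevels (fun η : Conf V N => ∑ x, η.1 x) L := by
  intro k f hf η hη
  by_cases hk : k ≤ N
  · exact hsector k hk f hf η hη
  · have hf0 : f = 0 := funext fun ξ => hf ξ (ne_of_lt (lt_of_le_of_lt ξ.2 (not_le.1 hk)))
    simp [hf0]

lemma Ffun_ne_zero_iff {ζ η : Conf V N} : Ffun ζ η ≠ 0 ↔ ∀ x, ζ.1 x ≤ η.1 x := by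
  simp [Ffun, Finset.prod_eq_zero_iff, Nat.choose_eq_zero_iff]

lemma Ffun_of_sum_eq {ζ η : Conf V N} (h : (∑ x, η.1 x) = ∑ x, ζ.1 x) :
    Ffun ζ η = if η = ζ then 1 else 0 := by
  split_ifs with hηζ
  · subst hηζ; simp [Ffun]
  · by_contra hF
    have hle := Ffun_ne_zero_iff.1 hF
    have heq := (Finset.sum_eq_sum_iff_of_le fun x _ => hle x).1 h.symm
    exact hηζ (Subtype.ext (funext fun x => (heq x (Finset.mem_univ x)).symm))

variable [DecidableEq V]

variable (V N) in
noncomputable def annL : Module.End ℝ (Conf V N → ℝ) where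
  toFun := ann
  map_add' f g := by ext η; simp [ann, mul_add, Finset.sum_add_distrib]
  map_smul' c f := by ext η; simp [ann, Finset.mul_sum, mul_left_comm]

lemma annL_apply (f : Conf V N → ℝ) : annL V N f = ann f := rfl

lemma annL_pow_apply (k : ℕ) (f : Conf V N → ℝ) : (annL V N ^ k) f = ann^[k] f :=
  Module.End.pow_apply _ _ _

lemma commute_annL {L : Module.End ℝ (Conf V N → ℝ)} (hcomm : ∀ f, L (ann f) = ann (L f)) :
    Commute (annL V N) L :=
  LinearMap.ext fun f => (hcomm f).symm

lemma sum_removeAt_add_one {η : Conf V N} {y : V} (hy : η.1 y ≠ 0) :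
    (∑ z, (removeAt η y).1 z) + 1 = ∑ z, η.1 z := by
  have hpt : ∀ z, (removeAt η y).1 z + (if z = y then 1 else 0) = η.1 z := by
    intro z
    change η.1 z - _ + _ = _
    split_ifs with hz
    · subst hz; omega
    · rfl
  simp [← Finset.sum_congr rfl fun z _ => hpt z, Finset.sum_add_distrib]

lemma mul_choose_sub_one (a b : ℕ) : a * (a - 1).choose b = (a - b) * a.choose b := by
  cases a with
  | zero => simp
  | succ a => simpa [mul_comm] using Nat.choose_mul_succ_eq a b

lemma mul_Ffun_removeAt (ζ η : Conf V N) (y : V) :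
    η.1 y * Ffun ζ (removeAt η y) = (η.1 y - ζ.1 y) * Ffun ζ η := by
  have hy : (removeAt η y).1 y = η.1 y - 1 := by simp [removeAt]
  have hz : ∀ z ∈ Finset.univ.erase y,
      ((removeAt η y).1 z).choose (ζ.1 z) = (η.1 z).choose (ζ.1 z) :=
    fun z hz => by simp [removeAt, Finset.ne_of_mem_erase hz]
  unfold Ffun
  rw [← Finset.mul_prod_erase _ _ (Finset.mem_univ y),
    ← Finset.mul_prod_erase _ _ (Finset.mem_univ y), Finset.prod_congr rfl hz, hy,
    ← mul_assoc, ← mul_assoc, mul_choose_sub_one]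

lemma sum_mul_Ffun_removeAt (ζ η : Conf V N) :
    ∑ y, η.1 y * Ffun ζ (removeAt η y) = ((∑ y, η.1 y) - ∑ y, ζ.1 y) * Ffun ζ η := by
  simp_rw [mul_Ffun_removeAt, ← Finset.sum_mul]
  by_cases hF : Ffun ζ η = 0
  · simp [hF]
  · rw [Finset.sum_tsub_distrib _ fun x _ => Ffun_ne_zero_iff.1 hF x]

lemma ann_Ffun_on_sector (ζ : Conf V N) (k : ℕ) (η : Conf V N) :
    ann (fun ξ => if (∑ x, ξ.1 x) = k then (Ffun ζ ξ : ℝ) else 0) η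
      = if (∑ x, η.1 x) = k + 1 then ((k + 1 - ∑ x, ζ.1 x : ℕ) : ℝ) * Ffun ζ η else 0 := by
  have hterm : ∀ y, (η.1 y : ℝ) *
      (if (∑ x, (removeAt η y).1 x) = k then (Ffun ζ (removeAt η y) : ℝ) else 0)
      = if (∑ x, η.1 x) = k + 1 then (η.1 y : ℝ) * Ffun ζ (removeAt η y) else 0 := by
    intro y
    rcases eq_or_ne (η.1 y) 0 with hy | hy
    · simp [hy]
    · have := sum_removeAt_add_one hy
      simp only [show (∑ x, (removeAt η y).1 x) = k ↔ (∑ x, η.1 x) = k + 1 by omega]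
      split_ifs <;> simp
  simp only [ann, hterm]
  split_ifs with hη
  · rw [← hη]; exact_mod_cast sum_mul_Ffun_removeAt ζ η
  · simp

lemma ann_iterate_indicator {ζ : Conf V N} {m : ℕ} (hζ : (∑ x, ζ.1 x) = m) (j : ℕ) :
    ann^[j] (fun η => if η = ζ then 1 else 0)
      = (j.factorial : ℝ) • fun η => if (∑ x, η.1 x) = m + j then (Ffun ζ η : ℝ) else 0 := by
  induction j with
  | zero =>
    ext η
    by_cases hη : (∑ x, η.1 x) = m
    · simp [hη, Ffun_of_sum_eq (hη.trans hζ.symm)]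
    · have hne : η ≠ ζ := by rintro rfl; exact hη hζ
      simp [hη, hne]
  | succ j ih =>
    ext η
    rw [Function.iterate_succ_apply', ih, ← annL_apply, map_smul, Pi.smul_apply, annL_apply,
      ann_Ffun_on_sector, hζ, show m + j + 1 - m = j + 1 by omega,
      show m + (j + 1) = m + j + 1 by omega]
    split_ifs
    · simp only [Pi.smul_apply, smul_eq_mul, if_pos ‹_›, Nat.factorial_succ]
      push_cast
      ring
    · simp [*]

lemma phiS_sum {n : ℕ} (hn : n ≤ N) (x : Fin n → V) (S : Finset (Fin n)) :
    (∑ y, (phiS hn x S).1 y) = S.card := by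
  simpa [phiS] using (Finset.card_eq_sum_card_fiberwise fun i _ => Finset.mem_univ (x i)).symm

lemma removeAt_phiS {n : ℕ} (hn : n ≤ N) (x : Fin n → V) {S : Finset (Fin n)} {i : Fin n}
    (hi : i ∈ S) : removeAt (phiS hn x S) (x i) = phiS hn x (S.erase i) := by
  ext y
  simp only [removeAt, phiS, ← Finset.sum_erase_add S _ hi, eq_comm (a := y)]
  omega

lemma ann_phiS {n : ℕ} (hn : n ≤ N) (x : Fin n → V) (S : Finset (Fin n)) (g : Conf V N → ℝ) :
    ann g (phiS hn x S) = ∑ i ∈ S, g (phiS hn x (S.erase i)) := by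
  calc ann g (phiS hn x S)
      = ∑ i ∈ S, ∑ y, if x i = y then g (removeAt (phiS hn x S) y) else 0 := by
        simp only [ann, phiS, Nat.cast_sum, Nat.cast_ite, Nat.cast_one, Nat.cast_zero,
          Finset.sum_mul, ite_mul, one_mul, zero_mul]
        exact Finset.sum_comm
    _ = ∑ i ∈ S, g (phiS hn x (S.erase i)) :=
        Finset.sum_congr rfl fun i hi => by simp [removeAt_phiS hn x hi]

lemma ann_iterate_phiS {n : ℕ} (hn : n ≤ N) (x : Fin n → V) (g : Conf V N → ℝ) (r k : ℕ)
    (S : Finset (Fin n)) (hS : S.card = r + k) :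
    (ann^[k] g) (phiS hn x S) = (k.factorial : ℝ) * ∑ T ∈ S.powersetCard r, g (phiS hn x T) := by
  induction k generalizing S with
  | zero =>
    rw [add_zero] at hS
    simp [← hS, Finset.powersetCard_self]
  | succ k ih =>
    have hrec : ∀ i ∈ S, (ann^[k] g) (phiS hn x (S.erase i))
        = (k.factorial : ℝ) * ∑ T ∈ (S.erase i).powersetCard r, g (phiS hn x T) :=
      fun i hi => ih _ (by rw [Finset.card_erase_of_mem hi]; omega)
    rw [Function.iterate_succ_apply', ann_phiS, Finset.sum_congr rfl hrec, ← Finset.mul_sum,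
      Finset.sum_sum_powersetCard_erase, hS, nsmul_eq_mul, Nat.factorial_succ]
    push_cast [show r + (k + 1) - r = k + 1 by omega]
    ring

end Configurations

theorem stmt6_general {V : Type*} [Fintype V] [DecidableEq V] (N : ℕ)
    (L : (Conf V N → ℝ) →ₗ[ℝ] (Conf V N → ℝ))
    (hcomm : ∀ f, L (ann f) = ann (L f))
    (hsector : ∀ k ≤ N, ∀ f : Conf V N → ℝ,
        (∀ η : Conf V N, (∑ x, η.1 x) ≠ k → f η = 0) →
        ∀ η : Conf V N, (∑ x, η.1 x) ≠ k → L f η = 0)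
    (P : (Conf V N → ℝ) → Conf V N → ℝ)
    (hP : ∀ (f : Conf V N → ℝ) (η : Conf V N),
        Tendsto (fun t : ℝ => expOp t L f η) atTop (𝓝 (P f η)))
    (n : ℕ) (hn : n ≤ N) (x : Fin n → V)
    (ζ : Conf V N) (m : ℕ) (hmn : m < n) (hζ : (∑ y, ζ.1 y) = m) :
    P (fun η => (Ffun ζ η : ℝ)) (phiS hn x Finset.univ)
      = ∑ S ∈ Finset.powersetCard m (Finset.univ : Finset (Fin n)),
          P (fun η => if η = ζ then 1 else 0) (phiS hn x S) := by
  obtain ⟨k, rfl⟩ : ∃ k, n = m + k := ⟨n - m, by omega⟩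
  let A := (k.factorial : ℝ)⁻¹ • annL V N ^ k
  have hA : Commute A L := ((commute_annL hcomm).pow_left k).smul_left _
  have hk : (k.factorial : ℝ) ≠ 0 := by positivity
  have hFA : ∀ ξ : Conf V N, (∑ y, ξ.1 y) = m + k →
      (Ffun ζ ξ : ℝ) = A (fun η => if η = ζ then 1 else 0) ξ := by
    intro ξ hξ
    simp [A, annL_pow_apply, ann_iterate_indicator hζ, hξ, inv_mul_cancel_left₀ hk]
  calc P (fun η => (Ffun ζ η : ℝ)) (phiS hn x Finset.univ)
      = P (A fun η => if η = ζ then 1 else 0) (phiS hn x Finset.univ) :=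
        (preservesLevels_of_sector hsector).limit_congr hP fun ξ hξ =>
          hFA ξ (by simpa [phiS_sum] using hξ)
    _ = A (P fun η => if η = ζ then 1 else 0) (phiS hn x Finset.univ) := by
        rw [limit_apply_of_commute hA hP]
    _ = _ := by
        simp [A, annL_pow_apply, ann_iterate_phiS hn x _ m k, inv_mul_cancel_left₀ hk]

/-- **Recursion relations for absorption probabilities** (Theorem 5.1): for a consistent,
particle-number-conserving configuration process whose semigroup converges pointwise as
`t → ∞` to `P`, the limiting expectation of `F(ζ,·)` started from `n > m` particles at
positions `x` equals the sum over all `m`-element subsamples of the absorption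
probabilities `(P h_ζ)`. -/
theorem stmt6 {V : Type*} [Fintype V] [DecidableEq V] (N : ℕ)
    (L : (Conf V N → ℝ) →ₗ[ℝ] (Conf V N → ℝ))
    (hcomm : ∀ f, L (ann f) = ann (L f))
    (hsector : ∀ k ≤ N, ∀ f : Conf V N → ℝ,
        (∀ η : Conf V N, (∑ x, η.1 x) ≠ k → f η = 0) →
        ∀ η : Conf V N, (∑ x, η.1 x) ≠ k → L f η = 0)
    (P : (Conf V N → ℝ) → Conf V N → ℝ)
    (hP : ∀ (f : Conf V N → ℝ) (η : Conf V N),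
        Tendsto (fun t : ℝ => expOp t L f η) atTop (𝓝 (P f η)))
    (n : ℕ) (hn : n ≤ N) (x : Fin n → V)
    (ζ : Conf V N) (m : ℕ) (hm1 : 1 ≤ m) (hmn : m < n) (hζ : (∑ y, ζ.1 y) = m) :
    P (fun η => (Ffun ζ η : ℝ)) (phiS hn x Finset.univ)
      = ∑ S ∈ Finset.powersetCard m (Finset.univ : Finset (Fin n)),
          P (fun η => if η = ζ then 1 else 0) (phiS hn x S) :=
  stmt6_general N L hcomm hsector P hP n hn x ζ m hmn hζ
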